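/- The functions t ↦ e^{√(-t)}/sinh(2√(-t)) and t ↦ e^{-√(-t)}/sinh(2√(-t)), defined for t < 0 (with √ the positive square root of -t), are absolutely monotonic on (-∞,0): all their derivatives are nonnegative there. -/

import Mathlib

/-!
With `g t = exp (-√(-t))`, which takes values in `(0, 1)` for `t < 0`, the two functions are
`2 g / (1 - g⁴)` and `2 g³ / (1 - g⁴)`. On an open set, absolute monotonicity is preserved by
products (Leibniz rule) and by compositions `φ ∘ g` with `φ` and `g'` absolutely monotone (chain
rule and Leibniz rule, by strong induction on the order of the derivative). It therefore suffices
that `exp`, `v ↦ (1 - v)⁻¹` on `(-∞, 1)` and `t ↦ (-t) ^ (-1/2)` on `(-∞, 0)` (the derivative of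
`-2√(-t)`) are absolutely monotone, which can be read off from their explicit iterated derivatives.
-/

open Set Filter Topology Real
open scoped ContDiff

theorem iteratedDeriv_mul_nonneg {f g : ℝ → ℝ} {x : ℝ} {n : ℕ} (hf : ContDiffAt ℝ n f x)
    (hg : ContDiffAt ℝ n g x) (hf₀ : ∀ i ≤ n, 0 ≤ iteratedDeriv i f x)
    (hg₀ : ∀ i ≤ n, 0 ≤ iteratedDeriv i g x) : 0 ≤ iteratedDeriv n (f * g) x := by
  rw [iteratedDeriv_mul hf hg]
  refine Finset.sum_nonneg fun i hi => ?_
  have hin := Finset.mem_range_succ_iff.1 hi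
  exact mul_nonneg (mul_nonneg (Nat.cast_nonneg _) (hf₀ i hin)) (hg₀ _ (Nat.sub_le _ _))

theorem absolutelyMonotoneOn_const {c : ℝ} (hc : 0 ≤ c) (s : Set ℝ) :
    AbsolutelyMonotoneOn (fun _ => c) s :=
  .of_contDiff contDiff_const fun n x _ => by
    rw [iteratedDeriv_const]
    split_ifs <;> simp [hc]

theorem absolutelyMonotoneOn_exp (s : Set ℝ) : AbsolutelyMonotoneOn exp s :=
  .of_contDiff contDiff_exp fun n x _ => by
    rw [iteratedDeriv_eq_iterate, iter_deriv_exp]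
    exact (exp_pos x).le

namespace AbsolutelyMonotoneOn

variable {f g φ : ℝ → ℝ} {s t : Set ℝ}

theorem iff_iteratedDeriv_nonneg_of_isOpen (hs : IsOpen s) :
    AbsolutelyMonotoneOn f s ↔
      ContDiffOn ℝ ∞ f s ∧ ∀ n : ℕ, ∀ x ∈ s, 0 ≤ iteratedDeriv n f x := by
  rw [iff_iteratedDerivWithin_nonneg hs.uniqueDiffOn]
  refine and_congr_right fun _ => forall_congr' fun n => forall₂_congr fun x hx => ?_
  rw [iteratedDerivWithin_of_isOpen hs hx]

theorem iteratedDeriv_nonneg (hf : AbsolutelyMonotoneOn f s) (hs : IsOpen s) (n : ℕ) {x : ℝ}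
    (hx : x ∈ s) : 0 ≤ iteratedDeriv n f x :=
  ((iff_iteratedDeriv_nonneg_of_isOpen hs).1 hf).2 n x hx

theorem congr (hf : AbsolutelyMonotoneOn f s) (h : EqOn g f s) : AbsolutelyMonotoneOn g s := by
  obtain ⟨p, hp, hp_nn⟩ := hf
  exact ⟨p, hp.congr h, hp_nn⟩

theorem deriv (hf : AbsolutelyMonotoneOn f s) (hs : IsOpen s) :
    AbsolutelyMonotoneOn (deriv f) s := by
  rw [iff_iteratedDeriv_nonneg_of_isOpen hs] at hf ⊢
  refine ⟨hf.1.deriv_of_isOpen hs (by simp), fun n x hx => ?_⟩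
  simpa only [iteratedDeriv_succ'] using hf.2 (n + 1) x hx

theorem mul (hf : AbsolutelyMonotoneOn f s) (hg : AbsolutelyMonotoneOn g s) (hs : IsOpen s) :
    AbsolutelyMonotoneOn (f * g) s := by
  rw [iff_iteratedDeriv_nonneg_of_isOpen hs] at hf hg ⊢
  refine ⟨hf.1.mul hg.1, fun n x hx => ?_⟩
  have hx' := hs.mem_nhds hx
  exact iteratedDeriv_mul_nonneg ((hf.1.contDiffAt hx').of_le (mod_cast le_top))
    ((hg.1.contDiffAt hx').of_le (mod_cast le_top)) (fun i _ => hf.2 i x hx)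
    (fun i _ => hg.2 i x hx)

theorem pow (hf : AbsolutelyMonotoneOn f s) (hs : IsOpen s) : ∀ n : ℕ,
    AbsolutelyMonotoneOn (f ^ n) s
  | 0 => by simpa [Pi.one_def] using absolutelyMonotoneOn_const zero_le_one s
  | n + 1 => by rw [pow_succ]; exact (hf.pow hs n).mul hf hs

theorem comp (hφ : AbsolutelyMonotoneOn φ t) (ht : IsOpen t) (hg : ContDiffOn ℝ ∞ g s)
    (hg' : AbsolutelyMonotoneOn (_root_.deriv g) s) (hs : IsOpen s) (hgst : MapsTo g s t) :
    AbsolutelyMonotoneOn (φ ∘ g) s := by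
  rw [iff_iteratedDeriv_nonneg_of_isOpen hs]
  refine ⟨hφ.contDiffOn.comp hg hgst, fun n => ?_⟩
  induction n using Nat.strong_induction_on generalizing φ with
  | _ n ih =>
  intro x hx
  rcases n with _ | n
  · simpa using hφ.iteratedDeriv_nonneg ht 0 (hgst hx)
  have hx' := hs.mem_nhds hx
  have hchain : _root_.deriv (φ ∘ g) =ᶠ[𝓝 x] (_root_.deriv φ ∘ g) * _root_.deriv g := by
    filter_upwards [hx'] with y hy
    have hφy := (hφ.contDiffOn.differentiableOn (by simp)).differentiableAt
      (ht.mem_nhds (hgst hy))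
    exact deriv_comp y hφy ((hg.differentiableOn (by simp)).differentiableAt (hs.mem_nhds hy))
  have hφ' := hφ.deriv ht
  rw [iteratedDeriv_succ', hchain.iteratedDeriv_eq]
  exact iteratedDeriv_mul_nonneg
    (((hφ'.contDiffOn.comp hg hgst).contDiffAt hx').of_le (mod_cast le_top))
    ((hg'.contDiffOn.contDiffAt hx').of_le (mod_cast le_top))
    (fun i hi => ih i (Nat.lt_succ_of_le hi) hφ' x hx)
    (fun i _ => hg'.iteratedDeriv_nonneg hs i hx)

end AbsolutelyMonotoneOn

theorem absolutelyMonotoneOn_inv_one_sub :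
    AbsolutelyMonotoneOn (fun x => (1 - x)⁻¹) (Iio 1) := by
  rw [AbsolutelyMonotoneOn.iff_iteratedDeriv_nonneg_of_isOpen isOpen_Iio]
  refine ⟨(contDiffOn_const.sub contDiffOn_id).inv fun x hx => (sub_pos.2 hx).ne', ?_⟩
  intro n x hx
  have h := congrFun (iter_deriv_inv_linear n (-1 : ℝ) 1) x
  simp only [neg_one_mul, neg_add_eq_sub] at h
  rw [iteratedDeriv_eq_iterate, h, mul_right_comm ((-1 : ℝ) ^ n), ← mul_pow,
    neg_one_mul, neg_neg, one_pow, one_mul]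
  exact mul_nonneg (Nat.cast_nonneg _) (zpow_pos (sub_pos.2 hx) _).le

theorem absolutelyMonotoneOn_neg_rpow {r : ℝ} (hr : r ≤ 0) :
    AbsolutelyMonotoneOn (fun x => (-x) ^ r) (Iio 0) := by
  rw [AbsolutelyMonotoneOn.iff_iteratedDeriv_nonneg_of_isOpen isOpen_Iio]
  refine ⟨contDiffOn_id.neg.rpow_const_of_ne fun x hx => neg_ne_zero.2 (ne_of_lt hx), ?_⟩
  intro n x hx
  -- the `n`-th derivative is `(-r)⁽ⁿ⁾ (-x) ^ (r - n)`, with `(-r)⁽ⁿ⁾` the rising factorial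
  have hpoch : 0 ≤ (ascPochhammer ℝ n).eval (-r) := by
    rcases hr.lt_or_eq with hr | rfl
    · exact (ascPochhammer_pos n _ (neg_pos.2 hr)).le
    · rw [neg_zero, ascPochhammer_eval_zero]
      split_ifs <;> norm_num
  rw [iteratedDeriv_comp_neg n (· ^ r), iteratedDeriv_eq_iterate, iter_deriv_rpow_const,
    smul_eq_mul, ← mul_assoc, ← ascPochhammer_eval_neg_eq_descPochhammer]
  exact mul_nonneg hpoch (rpow_nonneg (neg_nonneg.2 (le_of_lt hx)) _)

theorem AbsolutelyMonotoneOn.inv_one_sub {f : ℝ → ℝ} {s : Set ℝ}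
    (hf : AbsolutelyMonotoneOn f s) (hs : IsOpen s) (hf₁ : ∀ x ∈ s, f x < 1) :
    AbsolutelyMonotoneOn (fun x => (1 - f x)⁻¹) s :=
  absolutelyMonotoneOn_inv_one_sub.comp isOpen_Iio hf.contDiffOn (hf.deriv hs) hs hf₁

theorem hasDerivAt_neg_mul_sqrt_neg (a : ℝ) {x : ℝ} (hx : x < 0) :
    HasDerivAt (fun t => -(a * √(-t))) (a / 2 * (-x) ^ (-(1 / 2) : ℝ)) x := by
  have hsqrt := ((hasDerivAt_sqrt (neg_ne_zero.2 hx.ne)).comp x (hasDerivAt_neg x)).const_mul a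
  refine hsqrt.neg.congr_deriv ?_
  rw [rpow_neg (neg_nonneg.2 hx.le), ← sqrt_eq_rpow]
  field_simp

theorem absolutelyMonotoneOn_exp_neg_mul_sqrt_neg {a : ℝ} (ha : 0 ≤ a) :
    AbsolutelyMonotoneOn (fun t => exp (-(a * √(-t)))) (Iio 0) := by
  have hderiv : AbsolutelyMonotoneOn (deriv fun t => -(a * √(-t))) (Iio 0) :=
    ((absolutelyMonotoneOn_const (div_nonneg ha zero_le_two) _).mul
      (absolutelyMonotoneOn_neg_rpow (by norm_num)) isOpen_Iio).congr
      fun x hx => (hasDerivAt_neg_mul_sqrt_neg a hx).deriv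
  refine (absolutelyMonotoneOn_exp univ).comp isOpen_univ ?_ hderiv isOpen_Iio (mapsTo_univ _ _)
  exact (contDiffOn_const.mul (contDiffOn_id.neg.sqrt fun x hx => neg_ne_zero.2 hx.ne)).neg

theorem exp_div_sinh_two_mul (x : ℝ) :
    exp x / sinh (2 * x) = 2 * exp (-x) / (1 - exp (-x) ^ 4) := by
  rw [sinh_eq, exp_neg, exp_neg, show 2 * x = x + x by ring, exp_add]
  field_simp

theorem exp_neg_div_sinh_two_mul (x : ℝ) :
    exp (-x) / sinh (2 * x) = 2 * exp (-x) ^ 3 / (1 - exp (-x) ^ 4) := by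
  rw [sinh_eq, exp_neg, exp_neg, show 2 * x = x + x by ring, exp_add]
  field_simp

/-- The functions `t ↦ e^{√(-t)}/sinh(2√(-t))` and `t ↦ e^{-√(-t)}/sinh(2√(-t))`
are absolutely monotonic on `(-∞,0)`: all their derivatives are nonnegative. -/
theorem stmt_12 :
    (∀ k : ℕ, ∀ t : ℝ, t < 0 →
      0 ≤ iteratedDeriv k
        (fun s : ℝ => Real.exp (Real.sqrt (-s)) / Real.sinh (2 * Real.sqrt (-s))) t) ∧
    (∀ k : ℕ, ∀ t : ℝ, t < 0 →
      0 ≤ iteratedDeriv k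
        (fun s : ℝ => Real.exp (-Real.sqrt (-s)) / Real.sinh (2 * Real.sqrt (-s))) t) := by
  set g : ℝ → ℝ := fun s => exp (-√(-s))
  have hg : AbsolutelyMonotoneOn g (Iio 0) := by
    simpa using absolutelyMonotoneOn_exp_neg_mul_sqrt_neg zero_le_one
  have hg₄ : ∀ s ∈ Iio 0, (g ^ 4) s < 1 := fun s hs =>
    pow_lt_one₀ (exp_pos _).le (exp_lt_one_iff.2 (neg_lt_zero.2 (sqrt_pos.2 (neg_pos.2 hs))))
      four_ne_zero
  have hq := (hg.pow isOpen_Iio 4).inv_one_sub isOpen_Iio hg₄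
  have h₂ := absolutelyMonotoneOn_const zero_le_two (Iio 0)
  refine ⟨fun k t ht => ?_, fun k t ht => ?_⟩
  · refine (((h₂.mul hg isOpen_Iio).mul hq isOpen_Iio).congr fun s _ => ?_).iteratedDeriv_nonneg
      isOpen_Iio k ht
    simp only [g, Pi.mul_apply, Pi.pow_apply]
    rw [exp_div_sinh_two_mul, div_eq_mul_inv]
  · refine (((h₂.mul (hg.pow isOpen_Iio 3) isOpen_Iio).mul hq isOpen_Iio).congr
      fun s _ => ?_).iteratedDeriv_nonneg isOpen_Iio k ht
    simp only [g, Pi.mul_apply, Pi.pow_apply]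
    rw [exp_neg_div_sinh_two_mul, div_eq_mul_inv]
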